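/- Let (M, δ) be a matrix algebra with delta-form δ(x) = d·tr(xσ), let X = (1 ⊗ ⟦1⟧ ⊗ 1) ∘ m* : L²(M) → L²(M^3) (where m is multiplication and ⟦1⟧ inserts the unit in the middle tensor leg). Then for any operator T = ρ(x) ⊗ λ(y) on L²(M⊗M) (right action of x, left action of y): X* (1 ⊗ T) X = d^{-2} tr_M(xσ) tr_M(y σ^{-1}) · id on L²(M), where tr_M = d·tr is the Markov trace. Equivalently X*(1⊗T)X = d^{-2} (tr⊗tr)(T ∘ (ρ(σ) ⊗ λ(σ^{-1}))) · id. -/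

import Mathlib

/-!
Write `ι = 1 ⊗ ⟦1⟧ ⊗ 1`. Then `⟨(1 ⊗ ρ(x) ⊗ λ(y)) ι ξ, ι η⟩ = ⟨x, 1⟩ ⟨ξ, (1 ⊗ λ(y*)) η⟩` with
`⟨x, 1⟩ = d tr(xσ)`; the forms on the tensor powers are only specified on pure tensors, so this
and the identities below are checked there and extended by biadditivity. Taking `ξ = m* a` and
`η = m* c` leaves `⟨a, m (1 ⊗ λ(y*)) m* c⟩`. The adjoint of `m` is explicit,
`m* w = d⁻¹ ∑ w eⱼᵢ σ⁻¹ ⊗ eᵢⱼ`, and `∑ eⱼᵢ z eᵢⱼ = tr(z) 1`, so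
`m (1 ⊗ λ(y*)) m* = d⁻¹ tr(y* σ⁻¹) · id`.
-/

open scoped ComplexOrder TensorProduct

open Matrix TensorProduct

namespace Matrix

variable {n α : Type*} [Fintype n] [CommSemiring α]

theorem sum_single_one_mul_mul_single_one [DecidableEq n] (A : Matrix n n α) :
    ∑ i, ∑ j, single j i (1 : α) * A * single i j 1 = A.trace • (1 : Matrix n n α) := by
  ext p q
  simp [sum_apply, trace, single, one_apply, mul_apply, ite_and, eq_comm]

theorem sum_sum_apply_mul_apply (A B : Matrix n n α) :
    ∑ i, ∑ j, A j i * B i j = (A * B).trace := by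
  rw [Finset.sum_comm]
  simp [trace, mul_apply]

end Matrix

namespace TensorProduct

variable {R M N M' N' P : Type*} [CommSemiring R] [AddCommMonoid M] [AddCommMonoid N]
  [AddCommMonoid M'] [AddCommMonoid N'] [Module R M] [Module R N] [Module R M'] [Module R N']
  [AddCancelCommMonoid P]

theorem additive_ext {f g : M ⊗[R] N → P} (hf : ∀ ξ η, f (ξ + η) = f ξ + f η)
    (hg : ∀ ξ η, g (ξ + η) = g ξ + g η) (h : ∀ m n, f (m ⊗ₜ n) = g (m ⊗ₜ n)) : f = g := by
  have hf0 : f 0 = 0 := by simpa using hf 0 0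
  have hg0 : g 0 = 0 := by simpa using hg 0 0
  funext ξ
  induction ξ using TensorProduct.induction_on with
  | zero => rw [hf0, hg0]
  | tmul m n => exact h m n
  | add ξ η hξ hη => rw [hf, hg, hξ, hη]

theorem biadditive_ext {f g : M ⊗[R] N → M' ⊗[R] N' → P}
    (hf₁ : ∀ ξ ξ' η, f (ξ + ξ') η = f ξ η + f ξ' η) (hf₂ : ∀ ξ η η', f ξ (η + η') = f ξ η + f ξ η')
    (hg₁ : ∀ ξ ξ' η, g (ξ + ξ') η = g ξ η + g ξ' η) (hg₂ : ∀ ξ η η', g ξ (η + η') = g ξ η + g ξ η')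
    (h : ∀ m n m' n', f (m ⊗ₜ n) (m' ⊗ₜ n') = g (m ⊗ₜ n) (m' ⊗ₜ n')) : f = g := by
  have htmul : ∀ m n, f (m ⊗ₜ n) = g (m ⊗ₜ n) := fun m n =>
    additive_ext (hf₂ _) (hg₂ _) (h m n)
  funext ξ η
  exact congrFun (additive_ext (f := (f · η)) (g := (g · η)) (fun ξ ξ' => hf₁ ξ ξ' η)
    (fun ξ ξ' => hg₁ ξ ξ' η) (fun m n => congrFun (htmul m n) η)) ξ

end TensorProduct

section TensorForm

variable {R A K : Type*} [CommSemiring R] [Semiring A] [Algebra R A] [CommRing K]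
  {ip : A → A → K}

theorem tensorForm_map_id_mulLeft {ip2 : A ⊗[R] A → A ⊗[R] A → K}
    (hip2₁ : ∀ u v w, ip2 (u + v) w = ip2 u w + ip2 v w)
    (hip2₂ : ∀ u v w, ip2 u (v + w) = ip2 u v + ip2 u w)
    (hip2t : ∀ x y z t, ip2 (x ⊗ₜ[R] y) (z ⊗ₜ[R] t) = ip x z * ip y t)
    {z z' : A} (hz : ∀ v w, ip (z * v) w = ip v (z' * w)) (ξ η : A ⊗[R] A) :
    ip2 (map LinearMap.id (LinearMap.mulLeft R z) ξ) η =
      ip2 ξ (map LinearMap.id (LinearMap.mulLeft R z') η) := by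
  have := biadditive_ext
    (f := fun ξ η => ip2 (map LinearMap.id (LinearMap.mulLeft R z) ξ) η)
    (g := fun ξ η => ip2 ξ (map LinearMap.id (LinearMap.mulLeft R z') η))
    (fun _ _ _ => by simp only [map_add, hip2₁]) (fun _ _ _ => hip2₂ _ _ _)
    (fun _ _ _ => hip2₁ _ _ _) (fun _ _ _ => by simp only [map_add, hip2₂])
    (fun _ _ _ _ => by simp only [map_tmul, LinearMap.id_coe, id_eq, LinearMap.mulLeft_apply,
      hip2t, hz])
  exact congrFun (congrFun this ξ) η

theorem tensorForm_map_mulRight_mulLeft_insertOne {ip2 : A ⊗[R] A → A ⊗[R] A → K}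
    (hip2₁ : ∀ u v w, ip2 (u + v) w = ip2 u w + ip2 v w)
    (hip2₂ : ∀ u v w, ip2 u (v + w) = ip2 u v + ip2 u w)
    (hip2t : ∀ x y z t, ip2 (x ⊗ₜ[R] y) (z ⊗ₜ[R] t) = ip x z * ip y t)
    {ip3 : A ⊗[R] (A ⊗[R] A) → A ⊗[R] (A ⊗[R] A) → K}
    (hip3₁ : ∀ u v w, ip3 (u + v) w = ip3 u w + ip3 v w)
    (hip3₂ : ∀ u v w, ip3 u (v + w) = ip3 u v + ip3 u w)
    (hip3t : ∀ x y z x' y' z', ip3 (x ⊗ₜ[R] (y ⊗ₜ[R] z)) (x' ⊗ₜ[R] (y' ⊗ₜ[R] z'))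
      = ip x x' * ip y y' * ip z z')
    (x y : A) (ξ η : A ⊗[R] A) :
    ip3 (map LinearMap.id (map (LinearMap.mulRight R x) (LinearMap.mulLeft R y))
          (map LinearMap.id (TensorProduct.mk R A A 1) ξ))
        (map LinearMap.id (TensorProduct.mk R A A 1) η) =
      ip x 1 * ip2 (map LinearMap.id (LinearMap.mulLeft R y) ξ) η := by
  have := biadditive_ext
    (f := fun ξ η => ip3 (map LinearMap.id (map (LinearMap.mulRight R x) (LinearMap.mulLeft R y))
          (map LinearMap.id (TensorProduct.mk R A A 1) ξ))
        (map LinearMap.id (TensorProduct.mk R A A 1) η))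
    (g := fun ξ η => ip x 1 * ip2 (map LinearMap.id (LinearMap.mulLeft R y) ξ) η)
    (fun _ _ _ => by simp only [map_add, hip3₁]) (fun _ _ _ => by simp only [map_add, hip3₂])
    (fun _ _ _ => by simp only [map_add, hip2₁, mul_add])
    (fun _ _ _ => by simp only [hip2₂, mul_add])
    (fun _ _ _ _ => by
      simp only [map_tmul, LinearMap.id_coe, id_eq, TensorProduct.mk_apply,
        LinearMap.mulRight_apply, LinearMap.mulLeft_apply, one_mul, hip3t, hip2t]
      ring)
  exact congrFun (congrFun this ξ) η

end TensorForm

section DeltaInner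

variable {n : Type*} [Fintype n]

/-- `⟨x, y⟩ = δ(y* x)` for the delta-form `δ(x) = d · tr(xσ)`, `d = card n`. -/
def deltaInner (σ x y : Matrix n n ℂ) : ℂ :=
  (Fintype.card n : ℂ) * (star y * x * σ).trace

variable {σ : Matrix n n ℂ}

theorem deltaInner_add_left (x x' y : Matrix n n ℂ) :
    deltaInner σ (x + x') y = deltaInner σ x y + deltaInner σ x' y := by
  simp only [deltaInner, mul_add, add_mul, trace_add]

theorem deltaInner_sum_right {ι : Type*} (s : Finset ι) (x : Matrix n n ℂ) (y : ι → Matrix n n ℂ) :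
    deltaInner σ x (∑ i ∈ s, y i) = ∑ i ∈ s, deltaInner σ x (y i) := by
  simp only [deltaInner, star_sum, Finset.sum_mul, trace_sum, Finset.mul_sum]

theorem deltaInner_smul_right (x y : Matrix n n ℂ) (t : ℂ) :
    deltaInner σ x (t • y) = star t * deltaInner σ x y := by
  simp only [deltaInner, star_smul, smul_mul_assoc, trace_smul, smul_eq_mul]
  ring

theorem deltaInner_mul_left (z x y : Matrix n n ℂ) :
    deltaInner σ (z * x) y = deltaInner σ x (star z * y) := by
  simp only [deltaInner, star_mul, star_star, mul_assoc]

theorem star_deltaInner (hσ : σ.IsHermitian) (x y : Matrix n n ℂ) :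
    star (deltaInner σ x y) = deltaInner σ y x := by
  rw [deltaInner, deltaInner, star_mul', star_natCast, ← trace_conjTranspose]
  simp only [conjTranspose_mul, hσ.eq, star_eq_conjTranspose, conjTranspose_conjTranspose]
  rw [trace_mul_comm]

theorem deltaInner_single_right [DecidableEq n] (x : Matrix n n ℂ) (i j : n) :
    deltaInner σ x (single i j 1) = Fintype.card n * (x * σ) i j := by
  rw [deltaInner, star_eq_conjTranspose, conjTranspose_single, star_one, mul_assoc,
    trace_single_mul, one_smul]

theorem deltaInner_mul_inv_right [DecidableEq n] (hσ : σ.IsHermitian) (hσ' : IsUnit σ.det)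
    (x y : Matrix n n ℂ) :
    deltaInner σ x (y * σ⁻¹) = Fintype.card n * (star y * x).trace := by
  rw [deltaInner, star_mul, star_eq_conjTranspose σ⁻¹, hσ.inv.eq, trace_mul_comm, mul_assoc,
    mul_nonsing_inv_cancel_left _ _ hσ']

end DeltaInner

section Comultiplication

variable {n : Type*} [Fintype n] [DecidableEq n] {σ : Matrix n n ℂ}

theorem card_mul_deltaInner_mul' (hσ : σ.IsHermitian) (hσ' : IsUnit σ.det)
    {ip2 : Matrix n n ℂ ⊗[ℂ] Matrix n n ℂ → Matrix n n ℂ ⊗[ℂ] Matrix n n ℂ → ℂ}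
    (hip2₁ : ∀ u v w, ip2 (u + v) w = ip2 u w + ip2 v w)
    (hip2t : ∀ x y z t, ip2 (x ⊗ₜ[ℂ] y) (z ⊗ₜ[ℂ] t) = deltaInner σ x z * deltaInner σ y t)
    (ξ : Matrix n n ℂ ⊗[ℂ] Matrix n n ℂ) (w : Matrix n n ℂ) :
    Fintype.card n * deltaInner σ (LinearMap.mul' ℂ (Matrix n n ℂ) ξ) w =
      ∑ i, ∑ j, ip2 ξ ((w * single j i 1 * σ⁻¹) ⊗ₜ single i j 1) := by
  refine congrFun (additive_ext
    (f := fun ξ => Fintype.card n * deltaInner σ (LinearMap.mul' ℂ (Matrix n n ℂ) ξ) w)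
    (g := fun ξ => ∑ i, ∑ j, ip2 ξ ((w * single j i 1 * σ⁻¹) ⊗ₜ single i j 1))
    (fun _ _ => by simp only [map_add, deltaInner_add_left, mul_add])
    (fun _ _ => by simp only [hip2₁, Finset.sum_add_distrib]) fun u v => ?_) ξ
  have hterm (i j : n) : ip2 (u ⊗ₜ v) ((w * single j i 1 * σ⁻¹) ⊗ₜ single i j 1) =
      Fintype.card n * Fintype.card n * ((star w * u) j i * (v * σ) i j) := by
    rw [hip2t, deltaInner_mul_inv_right hσ hσ', deltaInner_single_right, star_mul,
      star_eq_conjTranspose (single j i 1), conjTranspose_single, star_one,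
      Matrix.mul_assoc (single i j 1), trace_single_mul, one_smul]
    ring
  simp only [hterm, ← Finset.mul_sum, sum_sum_apply_mul_apply, LinearMap.mul'_apply, deltaInner]
  rw [← mul_assoc, Matrix.mul_assoc, Matrix.mul_assoc, Matrix.mul_assoc]

theorem card_mul_deltaInner_mul'_map_mulLeft_comul (hσ : σ.IsHermitian) (hσ' : IsUnit σ.det)
    {ip2 : Matrix n n ℂ ⊗[ℂ] Matrix n n ℂ → Matrix n n ℂ ⊗[ℂ] Matrix n n ℂ → ℂ}
    (hip2₁ : ∀ u v w, ip2 (u + v) w = ip2 u w + ip2 v w)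
    (hip2₂ : ∀ u v w, ip2 u (v + w) = ip2 u v + ip2 u w)
    (hip2t : ∀ x y z t, ip2 (x ⊗ₜ[ℂ] y) (z ⊗ₜ[ℂ] t) = deltaInner σ x z * deltaInner σ y t)
    {comul : Matrix n n ℂ →ₗ[ℂ] Matrix n n ℂ ⊗[ℂ] Matrix n n ℂ}
    (hcomul : ∀ x ξ, ip2 (comul x) ξ = deltaInner σ x (LinearMap.mul' ℂ (Matrix n n ℂ) ξ))
    (y a c : Matrix n n ℂ) :
    Fintype.card n * deltaInner σ a (LinearMap.mul' ℂ (Matrix n n ℂ)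
        (map LinearMap.id (LinearMap.mulLeft ℂ (star y)) (comul c))) =
      (y * σ⁻¹).trace * deltaInner σ a c := by
  set ξ := map LinearMap.id (LinearMap.mulLeft ℂ (star y)) (comul c)
  have hy (v w : Matrix n n ℂ) : deltaInner σ (star y * v) w = deltaInner σ v (y * w) := by
    rw [deltaInner_mul_left, star_star]
  have key : Fintype.card n * deltaInner σ (LinearMap.mul' ℂ (Matrix n n ℂ) ξ) a =
      star (y * σ⁻¹).trace * deltaInner σ c a :=
    calc _ = ∑ i, ∑ j, ip2 ξ ((a * single j i 1 * σ⁻¹) ⊗ₜ single i j 1) :=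
          card_mul_deltaInner_mul' hσ hσ' hip2₁ hip2t ξ a
      _ = ∑ i, ∑ j, ip2 (comul c) ((a * single j i 1 * σ⁻¹) ⊗ₜ (y * single i j 1)) := by
          simp only [ξ, tensorForm_map_id_mulLeft hip2₁ hip2₂ hip2t hy, map_tmul,
            LinearMap.id_coe, id_eq, LinearMap.mulLeft_apply]
      _ = deltaInner σ c (∑ i, ∑ j, a * (single j i 1 * (σ⁻¹ * y) * single i j 1)) := by
          simp only [hcomul, LinearMap.mul'_apply, deltaInner_sum_right, Matrix.mul_assoc]
      _ = deltaInner σ c ((σ⁻¹ * y).trace • a) := by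
          simp only [← Finset.mul_sum, sum_single_one_mul_mul_single_one, mul_smul_comm, mul_one]
      _ = star (y * σ⁻¹).trace * deltaInner σ c a := by
          rw [deltaInner_smul_right, trace_mul_comm]
  have := congrArg star key
  rwa [star_mul', star_natCast, star_deltaInner hσ, star_mul', star_star,
    star_deltaInner hσ] at this

end Comultiplication

theorem stmt9_general (d : ℕ) (hd : 0 < d)
    (σ : Matrix (Fin d) (Fin d) ℂ) (hσ : σ.PosDef)
    -- the GNS inner product on L²(M)
    (ip : Matrix (Fin d) (Fin d) ℂ → Matrix (Fin d) (Fin d) ℂ → ℂ)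
    (hip : ∀ x y, ip x y = (d : ℂ) * ((star y) * x * σ).trace)
    -- the inner product on L²(M ⊗ M)
    (ip2 : (Matrix (Fin d) (Fin d) ℂ ⊗[ℂ] Matrix (Fin d) (Fin d) ℂ) →
      (Matrix (Fin d) (Fin d) ℂ ⊗[ℂ] Matrix (Fin d) (Fin d) ℂ) → ℂ)
    (hip2₁ : ∀ u v w, ip2 (u + v) w = ip2 u w + ip2 v w)
    (hip2₂ : ∀ u v w, ip2 u (v + w) = ip2 u v + ip2 u w)
    (hip2t : ∀ x y z t, ip2 (x ⊗ₜ[ℂ] y) (z ⊗ₜ[ℂ] t) = ip x z * ip y t)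
    -- the inner product on L²(M³) = M ⊗ (M ⊗ M)
    (ip3 : (Matrix (Fin d) (Fin d) ℂ ⊗[ℂ]
        (Matrix (Fin d) (Fin d) ℂ ⊗[ℂ] Matrix (Fin d) (Fin d) ℂ)) →
      (Matrix (Fin d) (Fin d) ℂ ⊗[ℂ]
        (Matrix (Fin d) (Fin d) ℂ ⊗[ℂ] Matrix (Fin d) (Fin d) ℂ)) → ℂ)
    (hip3₁ : ∀ u v w, ip3 (u + v) w = ip3 u w + ip3 v w)
    (hip3₂ : ∀ u v w, ip3 u (v + w) = ip3 u v + ip3 u w)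
    (hip3t : ∀ x y z x' y' z', ip3 (x ⊗ₜ[ℂ] (y ⊗ₜ[ℂ] z)) (x' ⊗ₜ[ℂ] (y' ⊗ₜ[ℂ] z'))
      = ip x x' * ip y y' * ip z z')
    -- `m*`, the adjoint of the multiplication map
    (mstar : Matrix (Fin d) (Fin d) ℂ →ₗ[ℂ]
      Matrix (Fin d) (Fin d) ℂ ⊗[ℂ] Matrix (Fin d) (Fin d) ℂ)
    (hadj : ∀ x ξ, ip2 (mstar x) ξ =
      ip x (LinearMap.mul' ℂ (Matrix (Fin d) (Fin d) ℂ) ξ))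
    -- `X = (1 ⊗ ⟦1⟧ ⊗ 1) ∘ m*`
    (X : Matrix (Fin d) (Fin d) ℂ →ₗ[ℂ] Matrix (Fin d) (Fin d) ℂ ⊗[ℂ]
      (Matrix (Fin d) (Fin d) ℂ ⊗[ℂ] Matrix (Fin d) (Fin d) ℂ))
    (hX : X = (TensorProduct.map LinearMap.id
        (TensorProduct.mk ℂ (Matrix (Fin d) (Fin d) ℂ) (Matrix (Fin d) (Fin d) ℂ)
          (1 : Matrix (Fin d) (Fin d) ℂ))).comp mstar)
    (x y : Matrix (Fin d) (Fin d) ℂ) :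
    ∀ a c : Matrix (Fin d) (Fin d) ℂ,
      ip3 (TensorProduct.map LinearMap.id
            (TensorProduct.map (LinearMap.mulRight ℂ x) (LinearMap.mulLeft ℂ y)) (X a))
          (X c)
        = (((d : ℂ) ^ 2)⁻¹ * ((d : ℂ) * (x * σ).trace) *
            ((d : ℂ) * (y * σ⁻¹).trace)) * ip a c := by
  intro a c
  obtain rfl : ip = deltaInner σ := by
    funext x y
    rw [hip, deltaInner, Fintype.card_fin]
  subst hX
  have hσ' : IsUnit σ.det := (isUnit_iff_isUnit_det σ).1 hσ.isUnit
  have hmiddle := card_mul_deltaInner_mul'_map_mulLeft_comul hσ.isHermitian hσ' hip2₁ hip2₂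
    hip2t hadj y a c
  rw [Fintype.card_fin] at hmiddle
  have hd' : (d : ℂ) ≠ 0 := by exact_mod_cast hd.ne'
  calc _ = deltaInner σ x 1 *
        ip2 (map LinearMap.id (LinearMap.mulLeft ℂ y) (mstar a)) (mstar c) :=
        tensorForm_map_mulRight_mulLeft_insertOne hip2₁ hip2₂ hip2t hip3₁ hip3₂ hip3t x y _ _
    _ = deltaInner σ x 1 * deltaInner σ a (LinearMap.mul' ℂ (Matrix (Fin d) (Fin d) ℂ)
        (map LinearMap.id (LinearMap.mulLeft ℂ (star y)) (mstar c))) := by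
      rw [tensorForm_map_id_mulLeft hip2₁ hip2₂ hip2t (deltaInner_mul_left y), hadj]
    _ = _ := by
      rw [deltaInner, Fintype.card_fin, star_one, Matrix.one_mul]
      field_simp
      linear_combination (x * σ).trace * hmiddle

/-- Let `M = ℂ^{d×d}` with delta-form `δ(x) = d·tr(xσ)` and let
`X = (1 ⊗ ⟦1⟧ ⊗ 1) ∘ m* : L²(M) → L²(M³)`.  For the operator `T = ρ(x) ⊗ λ(y)` on
`L²(M⊗M)` (right multiplication by `x` on the first leg, left multiplication by `y` on
the second leg), `X* (1 ⊗ T) X = d^{-2} tr_M(xσ) tr_M(yσ⁻¹) · id` on `L²(M)`, where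
`tr_M = d·tr` is the Markov trace.  (The sandwiched identity is expressed via the inner
products: `⟨(1⊗T) X a, X c⟩ = d^{-2} tr_M(xσ) tr_M(yσ⁻¹) ⟨a, c⟩`.) -/
theorem stmt9 (d : ℕ) (hd : 0 < d)
    (σ : Matrix (Fin d) (Fin d) ℂ) (hσ : σ.PosDef)
    (htr : (σ⁻¹).trace = (d : ℂ))
    -- the GNS inner product on L²(M)
    (ip : Matrix (Fin d) (Fin d) ℂ → Matrix (Fin d) (Fin d) ℂ → ℂ)
    (hip : ∀ x y, ip x y = (d : ℂ) * ((star y) * x * σ).trace)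
    -- the inner product on L²(M ⊗ M)
    (ip2 : (Matrix (Fin d) (Fin d) ℂ ⊗[ℂ] Matrix (Fin d) (Fin d) ℂ) →
      (Matrix (Fin d) (Fin d) ℂ ⊗[ℂ] Matrix (Fin d) (Fin d) ℂ) → ℂ)
    (hip2₁ : ∀ u v w, ip2 (u + v) w = ip2 u w + ip2 v w)
    (hip2₂ : ∀ u v w, ip2 u (v + w) = ip2 u v + ip2 u w)
    (hip2t : ∀ x y z t, ip2 (x ⊗ₜ[ℂ] y) (z ⊗ₜ[ℂ] t) = ip x z * ip y t)
    -- the inner product on L²(M³) = M ⊗ (M ⊗ M)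
    (ip3 : (Matrix (Fin d) (Fin d) ℂ ⊗[ℂ]
        (Matrix (Fin d) (Fin d) ℂ ⊗[ℂ] Matrix (Fin d) (Fin d) ℂ)) →
      (Matrix (Fin d) (Fin d) ℂ ⊗[ℂ]
        (Matrix (Fin d) (Fin d) ℂ ⊗[ℂ] Matrix (Fin d) (Fin d) ℂ)) → ℂ)
    (hip3₁ : ∀ u v w, ip3 (u + v) w = ip3 u w + ip3 v w)
    (hip3₂ : ∀ u v w, ip3 u (v + w) = ip3 u v + ip3 u w)
    (hip3t : ∀ x y z x' y' z', ip3 (x ⊗ₜ[ℂ] (y ⊗ₜ[ℂ] z)) (x' ⊗ₜ[ℂ] (y' ⊗ₜ[ℂ] z'))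
      = ip x x' * ip y y' * ip z z')
    -- `m*`, the adjoint of the multiplication map
    (mstar : Matrix (Fin d) (Fin d) ℂ →ₗ[ℂ]
      Matrix (Fin d) (Fin d) ℂ ⊗[ℂ] Matrix (Fin d) (Fin d) ℂ)
    (hadj : ∀ x ξ, ip2 (mstar x) ξ =
      ip x (LinearMap.mul' ℂ (Matrix (Fin d) (Fin d) ℂ) ξ))
    -- `X = (1 ⊗ ⟦1⟧ ⊗ 1) ∘ m*`
    (X : Matrix (Fin d) (Fin d) ℂ →ₗ[ℂ] Matrix (Fin d) (Fin d) ℂ ⊗[ℂ]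
      (Matrix (Fin d) (Fin d) ℂ ⊗[ℂ] Matrix (Fin d) (Fin d) ℂ))
    (hX : X = (TensorProduct.map LinearMap.id
        (TensorProduct.mk ℂ (Matrix (Fin d) (Fin d) ℂ) (Matrix (Fin d) (Fin d) ℂ)
          (1 : Matrix (Fin d) (Fin d) ℂ))).comp mstar)
    (x y : Matrix (Fin d) (Fin d) ℂ) :
    ∀ a c : Matrix (Fin d) (Fin d) ℂ,
      ip3 (TensorProduct.map LinearMap.id
            (TensorProduct.map (LinearMap.mulRight ℂ x) (LinearMap.mulLeft ℂ y)) (X a))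
          (X c)
        = (((d : ℂ) ^ 2)⁻¹ * ((d : ℂ) * (x * σ).trace) *
            ((d : ℂ) * (y * σ⁻¹).trace)) * ip a c :=
  stmt9_general d hd σ hσ ip hip ip2 hip2₁ hip2₂ hip2t ip3 hip3₁ hip3₂ hip3t mstar hadj X hX x y
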